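/- arXiv:1812.01607 — 5 statements merged into one kernel-verified Lean document; each statement's English description precedes it below -/
import Mathlib

section
/- A linear map T : Mₙ(ℂ) → Mₙ(ℂ) is completely positive if and only if for every k ∈ ℕ and all a₁,…,a_k, b₁,…,b_k ∈ Mₙ(ℂ), the sum ∑_{i,j} Tr(T(aᵢ* aⱼ)·(bᵢ* bⱼ)ᵗ) is nonnegative, where (·)ᵗ denotes transpose. -/
open scoped ComplexOrder Matrix

/-- The action of `id_{M_k} ⊗ T` on `M_k(Mₙ(ℂ))`, applying `T` blockwise. -/
def mapBlocks {n : ℕ} (k : ℕ)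
    (T : Matrix (Fin n) (Fin n) ℂ →ₗ[ℂ] Matrix (Fin n) (Fin n) ℂ)
    (M : Matrix (Fin k × Fin n) (Fin k × Fin n) ℂ) :
    Matrix (Fin k × Fin n) (Fin k × Fin n) ℂ :=
  Matrix.of fun p q => T (Matrix.of fun a b => M (p.1, a) (q.1, b)) p.2 q.2

/-- `T` is completely positive: `id_{M_k} ⊗ T` is positive for every `k`. -/
def IsCompletelyPositive {n : ℕ}
    (T : Matrix (Fin n) (Fin n) ℂ →ₗ[ℂ] Matrix (Fin n) (Fin n) ℂ) : Prop :=
  ∀ (k : ℕ) (M : Matrix (Fin k × Fin n) (Fin k × Fin n) ℂ),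
    M.PosSemidef → (mapBlocks k T M).PosSemidef

/-!
Both sides are statements about the forms `Q_{T,a}(w) = ∑ᵢⱼ ⟨wᵢ, T(aᵢ* aⱼ) wⱼ⟩` (`gramForm`).
Row by row, `Tr(X (b* c)ᵗ) = ∑_r ⟨b_r, X c_r⟩`, so the trace sum is `∑_r Q_{T,a}(r-th rows of b)`,
and matrices `bᵢ` with a single nonzero row recover every `Q_{T,a}(w)`. A positive block matrix is
`N* N`, whose `(i, j)` block is `∑_s N_{si}* N_{sj}`, so the quadratic form of `(id ⊗ T)(N* N)` is
`∑_s Q_{T,N_s}`; taking `N` with a single block row gives `(id ⊗ T)[aᵢ* aⱼ]`. Over `ℂ`, a matrix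
with nonnegative quadratic form is automatically Hermitian, hence positive semidefinite.
-/

namespace Matrix

variable {ι m n R : Type*} [Fintype ι] [Fintype m] [Fintype n]

theorem posSemidef_of_forall_dotProduct_mulVec_nonneg {A : Matrix ι ι ℂ}
    (h : ∀ v, 0 ≤ star v ⬝ᵥ A *ᵥ v) : A.PosSemidef := by
  classical
  refine .of_dotProduct_mulVec_nonneg ?_ h
  rw [← isSymmetric_toEuclideanLin_iff, LinearMap.isSymmetric_iff_inner_map_self_real]
  intro v
  have hreal := Complex.conj_eq_iff_im.mpr (Complex.nonneg_iff.mp (h v.ofLp)).2.symm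
  simpa [EuclideanSpace.inner_eq_star_dotProduct, dotProduct_star, dotProduct_comm (A *ᵥ _)]
    using hreal.symm

theorem dotProduct_mulVec_eq_sum_comp_symm [NonUnitalNonAssocSemiring R] [StarRing R]
    (P : Matrix (ι × m) (ι × m) R) (v : ι × m → R) :
    star v ⬝ᵥ P *ᵥ v = ∑ i, ∑ j,
      star (fun x => v (i, x)) ⬝ᵥ (comp ι ι m m R).symm P i j *ᵥ fun y => v (j, y) := by
  simp only [dotProduct, mulVec, Fintype.sum_prod_type, Finset.mul_sum, Pi.star_apply,
    comp_symm_apply]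
  exact Finset.sum_congr rfl fun i _ => Finset.sum_comm

omit [Fintype n] in
theorem comp_symm_conjTranspose_mul_self {κ : Type*} [NonUnitalSemiring R] [StarRing R]
    (N : Matrix (ι × m) (κ × n) R) (i j : κ) :
    (comp κ κ n n R).symm (Nᴴ * N) i j =
      ∑ s, ((comp ι κ m n R).symm N s i)ᴴ * (comp ι κ m n R).symm N s j := by
  ext x y
  simp [mul_apply, Fintype.sum_prod_type, sum_apply]

theorem trace_mul_transpose_conjTranspose_mul [CommSemiring R] [StarRing R]
    (X : Matrix n n R) (b c : Matrix m n R) :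
    (X * (bᴴ * c)ᵀ).trace = ∑ r, star (b r) ⬝ᵥ X *ᵥ c r := by
  simp only [trace, diag, mul_apply, transpose_apply, conjTranspose_apply, dotProduct, mulVec,
    Finset.mul_sum, Pi.star_apply]
  conv_rhs => rw [Finset.sum_comm]; enter [2, x]; rw [Finset.sum_comm]
  refine Finset.sum_congr rfl fun x _ => Finset.sum_congr rfl fun y _ =>
    Finset.sum_congr rfl fun r _ => ?_
  ring

end Matrix

open Matrix

section GramForm

variable {ι l m R : Type*} [Fintype ι] [Fintype l] [Fintype m] [CommSemiring R] [StarRing R]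

def gramForm (T : Matrix m m R → Matrix m m R) (a : ι → Matrix m m R) (w : ι → m → R) : R :=
  ∑ i, ∑ j, star (w i) ⬝ᵥ T ((a i)ᴴ * a j) *ᵥ w j

theorem sum_trace_eq_sum_gramForm (T : Matrix m m R → Matrix m m R) (a : ι → Matrix m m R)
    (b : ι → Matrix l m R) :
    ∑ i, ∑ j, (T ((a i)ᴴ * a j) * ((b i)ᴴ * b j)ᵀ).trace = ∑ r, gramForm T a fun i => b i r := by
  simp only [trace_mul_transpose_conjTranspose_mul, gramForm]
  conv_lhs => enter [2, i]; rw [Finset.sum_comm]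
  exact Finset.sum_comm

theorem gramForm_eq_sum_trace [DecidableEq l] (T : Matrix m m R → Matrix m m R)
    (a : ι → Matrix m m R) (w : ι → m → R) (r : l) :
    gramForm T a w = ∑ i, ∑ j,
      (T ((a i)ᴴ * a j) * ((updateRow 0 r (w i))ᴴ * updateRow 0 r (w j))ᵀ).trace := by
  rw [sum_trace_eq_sum_gramForm, Finset.sum_eq_single r]
  · simp only [updateRow_self]
  · intro r' _ hr'
    simp [gramForm, hr', show (0 : Matrix l m R) r' = 0 from rfl]
  · simp

end GramForm

theorem dotProduct_mulVec_mapBlocks_conjTranspose_mul_self {ι : Type*} [Fintype ι] {n : ℕ}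
    (k : ℕ) (T : Matrix (Fin n) (Fin n) ℂ →ₗ[ℂ] Matrix (Fin n) (Fin n) ℂ)
    (N : Matrix (ι × Fin n) (Fin k × Fin n) ℂ) (v : Fin k × Fin n → ℂ) :
    star v ⬝ᵥ mapBlocks k T (Nᴴ * N) *ᵥ v =
      ∑ s, gramForm T (fun i => (comp _ _ _ _ ℂ).symm N s i) (fun i x => v (i, x)) := by
  rw [dotProduct_mulVec_eq_sum_comp_symm]
  have hblock (i j : Fin k) : (comp _ _ _ _ ℂ).symm (mapBlocks k T (Nᴴ * N)) i j =
      ∑ s, T (((comp _ _ _ _ ℂ).symm N s i)ᴴ * (comp _ _ _ _ ℂ).symm N s j) := by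
    rw [← map_sum, ← comp_symm_conjTranspose_mul_self]
    rfl
  simp only [hblock, sum_mulVec, dotProduct_sum, gramForm]
  conv_lhs => enter [2, i]; rw [Finset.sum_comm]
  exact Finset.sum_comm

/-- `T` is completely positive iff for every `k` and all `a₁,…,a_k, b₁,…,b_k`,
`∑_{i,j} Tr(T(aᵢ* aⱼ)·(bᵢ* bⱼ)ᵗ) ≥ 0`. -/
theorem completelyPositive_iff_trace_sum_nonneg (n : ℕ)
    (T : Matrix (Fin n) (Fin n) ℂ →ₗ[ℂ] Matrix (Fin n) (Fin n) ℂ) :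
    IsCompletelyPositive T ↔
    (∀ (k : ℕ) (a b : Fin k → Matrix (Fin n) (Fin n) ℂ),
      0 ≤ ∑ i, ∑ j, (T ((a i)ᴴ * a j) * ((b i)ᴴ * b j)ᵀ).trace) := by
  constructor
  · intro hT k a b
    have hA := hT k _ (posSemidef_conjTranspose_mul_self
      (comp Unit (Fin k) (Fin n) (Fin n) ℂ (of fun _ i => a i)))
    rw [sum_trace_eq_sum_gramForm]
    refine Finset.sum_nonneg fun r _ => ?_
    simpa [dotProduct_mulVec_mapBlocks_conjTranspose_mul_self] using
      hA.dotProduct_mulVec_nonneg fun p => b p.1 r p.2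
  · intro H k M hM
    obtain ⟨N, rfl⟩ : ∃ N, M = star N * N := by
      open scoped MatrixOrder in exact CStarAlgebra.nonneg_iff_eq_star_mul_self.mp hM.nonneg
    refine posSemidef_of_forall_dotProduct_mulVec_nonneg fun v => ?_
    rw [star_eq_conjTranspose, dotProduct_mulVec_mapBlocks_conjTranspose_mul_self]
    refine Finset.sum_nonneg fun s _ => ?_
    rcases isEmpty_or_nonempty (Fin n) with _ | ⟨⟨r⟩⟩
    · simp [gramForm]
    · rw [gramForm_eq_sum_trace _ _ _ r]
      exact H k _ _
end

section
/- For vectors f₁,…,f_k, g₁,…,g_k in a finite-dimensional Hilbert space H, the map T : B(H) → B(H) given by T(a) = ∑_k V_k* a V_k with V_k = |f_k⟩⟨g_k| (rank-one operators) satisfies: for any a₁,…,aₙ, ρ₁,…,ρₙ ∈ B(H) with ∑ᵢ aᵢ ⊗ ρᵢ positive on all simple tensors of H⊗H (i.e., ⟨f⊗g, (∑ᵢ aᵢ⊗ρᵢ)(f⊗g)⟩ ≥ 0 for all f,g ∈ H), one has ∑ᵢ Tr(T(aᵢ)ρᵢ) ≥ 0. -/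
/-!
For `V = |f⟩⟨g|` one has `Tr(V* a V ρ) = ⟨f, a f⟩ ⟨g, ρ g⟩`, which is also the quadratic form
of `a ⊗ ρ` at `f ⊗ g`. Hence the `k`-th Kraus term of `∑ᵢ Tr(T(aᵢ) ρᵢ)` is the quadratic form of
`∑ᵢ aᵢ ⊗ ρᵢ` at the simple tensor `f_k ⊗ g_k`, which is nonnegative by hypothesis.
-/

open scoped ComplexOrder Matrix Kronecker

/-- The rank-one operator `|f⟩⟨g| : x ↦ ⟨g,x⟩f` as a matrix. -/
def rankOne {d : ℕ} (f g : Fin d → ℂ) : Matrix (Fin d) (Fin d) ℂ :=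
  Matrix.vecMulVec f (star g)

/-- The simple tensor `f ⊗ g` as a vector on `H ⊗ H`. -/
def simpleTensor {d : ℕ} (f g : Fin d → ℂ) : Fin d × Fin d → ℂ :=
  fun p => f p.1 * g p.2

namespace Matrix

variable {m n R : Type*} [Fintype m] [Fintype n]

theorem kronecker_mulVec_prod [CommSemiring R] (A : Matrix m m R) (B : Matrix n n R)
    (x : m → R) (y : n → R) :
    (A ⊗ₖ B) *ᵥ (fun p => x p.1 * y p.2) = fun p => (A *ᵥ x) p.1 * (B *ᵥ y) p.2 := by
  ext ⟨i, j⟩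
  simp only [mulVec, dotProduct, kroneckerMap_apply, Fintype.sum_prod_type, Finset.sum_mul_sum]
  exact Finset.sum_congr rfl fun k _ => Finset.sum_congr rfl fun l _ => by ring

theorem prod_dotProduct_prod [CommSemiring R] (u x : m → R) (v y : n → R) :
    (fun p : m × n => u p.1 * v p.2) ⬝ᵥ (fun p => x p.1 * y p.2) = (u ⬝ᵥ x) * (v ⬝ᵥ y) := by
  simp only [dotProduct, Fintype.sum_prod_type, Finset.sum_mul_sum]
  exact Finset.sum_congr rfl fun k _ => Finset.sum_congr rfl fun l _ => by ring

theorem trace_conjTranspose_vecMulVec_mul_mul_vecMulVec_mul [CommSemiring R] [StarRing R]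
    (f g : n → R) (a ρ : Matrix n n R) :
    ((vecMulVec f (star g))ᴴ * a * vecMulVec f (star g) * ρ).trace
      = (star f ⬝ᵥ a *ᵥ f) * (star g ⬝ᵥ ρ *ᵥ g) := by
  rw [conjTranspose_vecMulVec, star_star, vecMulVec_mul, vecMulVec_mul_vecMulVec, vecMulVec_mul,
    trace_vecMulVec, smul_vecMul, dotProduct_smul, smul_eq_mul, dotProduct_comm g,
    dotProduct_mulVec, dotProduct_mulVec]

end Matrix

open Matrix

section

variable {d : ℕ}

theorem star_simpleTensor (u v : Fin d → ℂ) :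
    star (simpleTensor u v) = simpleTensor (star u) (star v) :=
  funext fun _ => star_mul' _ _

theorem star_simpleTensor_dotProduct_kronecker_mulVec (u v : Fin d → ℂ)
    (a ρ : Matrix (Fin d) (Fin d) ℂ) :
    star (simpleTensor u v) ⬝ᵥ (a ⊗ₖ ρ) *ᵥ simpleTensor u v
      = (star u ⬝ᵥ a *ᵥ u) * (star v ⬝ᵥ ρ *ᵥ v) := by
  rw [star_simpleTensor]
  unfold simpleTensor
  rw [kronecker_mulVec_prod, prod_dotProduct_prod]

theorem sum_trace_rankOne_conjTranspose_mul_mul_rankOne_mul {N : ℕ} (u v : Fin d → ℂ)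
    (a ρ : Fin N → Matrix (Fin d) (Fin d) ℂ) :
    ∑ i, ((rankOne u v)ᴴ * a i * rankOne u v * ρ i).trace
      = star (simpleTensor u v) ⬝ᵥ (∑ i, a i ⊗ₖ ρ i) *ᵥ simpleTensor u v := by
  simp only [rankOne, trace_conjTranspose_vecMulVec_mul_mul_vecMulVec_mul, sum_mulVec,
    dotProduct_sum, star_simpleTensor_dotProduct_kronecker_mulVec]

end

/-- For `T(a) = ∑_k V_k* a V_k` with rank-one `V_k = |f_k⟩⟨g_k|`: if
`∑ᵢ aᵢ ⊗ ρᵢ` is positive on all simple tensors of `H ⊗ H`, then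
`∑ᵢ Tr(T(aᵢ)ρᵢ) ≥ 0`. -/
theorem rankOne_kraus_st_positive (d K N : ℕ) (f g : Fin K → (Fin d → ℂ))
    (T : Matrix (Fin d) (Fin d) ℂ → Matrix (Fin d) (Fin d) ℂ)
    (hT : ∀ a, T a = ∑ k, (rankOne (f k) (g k))ᴴ * a * rankOne (f k) (g k))
    (a ρ : Fin N → Matrix (Fin d) (Fin d) ℂ)
    (hst : ∀ u v : Fin d → ℂ,
      0 ≤ star (simpleTensor u v) ⬝ᵥ ((∑ i, a i ⊗ₖ ρ i) *ᵥ simpleTensor u v)) :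
    0 ≤ ∑ i, (T (a i) * ρ i).trace := by
  have h_kraus : ∑ i, (T (a i) * ρ i).trace
      = ∑ k, ∑ i, ((rankOne (f k) (g k))ᴴ * a i * rankOne (f k) (g k) * ρ i).trace := by
    simp only [hT, Finset.sum_mul, trace_sum]
    exact Finset.sum_comm
  rw [h_kraus]
  simp only [sum_trace_rankOne_conjTranspose_mul_mul_rankOne_mul]
  exact Finset.sum_nonneg fun k _ => hst (f k) (g k)
end

section
/- Let H = ℂ². If h ∈ H ⊗ H is a vector such that the partial transpose (id ⊗ t)(|h⟩⟨h|) is a positive semidefinite operator on H ⊗ H, then h is a simple tensor, i.e., h = f ⊗ g for some f, g ∈ H. -/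
/-!
View `h` as the coefficient matrix `(h (i, j))`; it is a simple tensor exactly when all its
`2 × 2` minors vanish. If `D` is such a minor, then testing the partial transpose of `|h⟩⟨h|` against
the vector `(-h̄(i',j), -h̄(i',j'), h̄(i,j), h̄(i,j'))` on the coordinates
`(i,j), (i,j'), (i',j), (i',j')` gives `-2 |D|²`, so positivity forces `D = 0`.
-/


open scoped ComplexOrder Matrix

/-- The partial transpose (transpose on the second tensor factor) of an
operator on `H ⊗ H`, in Kronecker coordinates. -/
def partialTranspose {d : ℕ}
    (M : Matrix (Fin d × Fin d) (Fin d × Fin d) ℂ) :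
    Matrix (Fin d × Fin d) (Fin d × Fin d) ℂ :=
  Matrix.of fun p q => M (p.1, q.2) (q.1, p.2)

/-- The rank-one operator `|h⟩⟨h|` on `H ⊗ H`. -/
def rankOneProj {d : ℕ} (h : Fin d × Fin d → ℂ) :
    Matrix (Fin d × Fin d) (Fin d × Fin d) ℂ :=
  Matrix.vecMulVec h (star h)


theorem exists_eq_mul_of_minors_eq_zero {K ι κ : Type*} [Field K] (h : ι × κ → K)
    (hminor : ∀ i i' j j', h (i, j) * h (i', j') = h (i, j') * h (i', j)) :
    ∃ (f : ι → K) (g : κ → K), h = fun p => f p.1 * g p.2 := by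
  by_cases hzero : h = 0
  · exact ⟨0, 0, by simp [hzero]; rfl⟩
  obtain ⟨⟨a, b⟩, hab⟩ := Function.ne_iff.mp hzero
  refine ⟨fun i => h (i, b), fun j => h (a, j) / h (a, b), funext fun ⟨i, j⟩ => ?_⟩
  rw [mul_div_assoc', eq_div_iff hab, hminor]

theorem partialTranspose_rankOneProj_apply {d : ℕ} (h : Fin d × Fin d → ℂ)
    (p q : Fin d × Fin d) :
    partialTranspose (rankOneProj h) p q = h (p.1, q.2) * star (h (q.1, p.2)) :=
  rfl

theorem minor_eq_zero_of_posSemidef_partialTranspose {d : ℕ} (h : Fin d × Fin d → ℂ)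
    (hpos : (partialTranspose (rankOneProj h)).PosSemidef) (i i' j j' : Fin d) :
    h (i, j) * h (i', j') = h (i, j') * h (i', j) := by
  set D := h (i, j) * h (i', j') - h (i, j') * h (i', j)
  let e : Fin 4 → Fin d × Fin d := ![(i, j), (i, j'), (i', j), (i', j')]
  let v : Fin 4 → ℂ :=
    ![-star (h (i', j)), -star (h (i', j')), star (h (i, j)), star (h (i, j'))]
  have hform : star v ⬝ᵥ (partialTranspose (rankOneProj h)).submatrix e e *ᵥ v
      = -2 * (star D * D) := by
    simp only [dotProduct, Pi.star_apply, Matrix.mulVec, Matrix.submatrix_apply,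
      partialTranspose_rankOneProj_apply, Fin.sum_univ_four, Matrix.cons_val_zero,
      Matrix.cons_val_one, Matrix.cons_val, star_neg, star_star, star_sub, star_mul', v, e, D]
    ring
  have hnonneg := (hpos.submatrix e).dotProduct_mulVec_nonneg v
  rw [hform, RCLike.star_def, Complex.conj_mul'] at hnonneg
  have hD : ‖D‖ = 0 := by
    have : (0 : ℝ) ≤ -2 * ‖D‖ ^ 2 := by exact_mod_cast hnonneg
    nlinarith [norm_nonneg D]
  exact sub_eq_zero.mp (norm_eq_zero.mp hD)

/-- For `H = ℂ²`: if the partial transpose of `|h⟩⟨h|` is positive semidefinite,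
then `h` is a simple tensor `f ⊗ g`. -/
theorem partialTranspose_posSemidef_implies_simple
    (h : Fin 2 × Fin 2 → ℂ)
    (hpos : (partialTranspose (rankOneProj h)).PosSemidef) :
    ∃ f g : Fin 2 → ℂ, h = fun p => f p.1 * g p.2 :=
  exists_eq_mul_of_minors_eq_zero h (minor_eq_zero_of_posSemidef_partialTranspose h hpos)
end

section
/- A linear map T : Mₙ(ℂ) → Mₙ(ℂ) is completely positive if and only if for all a₁,…,a_k, c₁,…,c_k ∈ Mₙ(ℂ) and all g ∈ ℂⁿ, ∑_{i,j} ⟨cᵢ g, T(aᵢ* aⱼ) cⱼ g⟩ ≥ 0. -/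
/-!
A positive semidefinite block matrix is `Xᴴ X` for a matrix `X` of blocks, and the `(i, j)` block
of `Xᴴ X` is `∑ₗ (X l i)ᴴ (X l j)`. Applying `T` blockwise and evaluating the quadratic form at
`x = (xᵢ)` therefore gives `∑ₗ ∑_{i,j} ⟨xᵢ, T((X l i)ᴴ (X l j)) xⱼ⟩`, and a single block row `X`
realises every expression `∑_{i,j} ⟨xᵢ, T(aᵢᴴ aⱼ) xⱼ⟩`. Every vector is of the form `c g`
(take `c = diag x`, `g = 1`), and over `ℂ` a nonnegative quadratic form already forces the matrix
to be Hermitian.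
-/

open scoped ComplexOrder Matrix

open Matrix

namespace Matrix

variable {I J K L R : Type*}

theorem comp_mul [Fintype J] [Fintype K] [NonUnitalNonAssocSemiring R]
    (A : Matrix I J (Matrix K K R)) (B : Matrix J L (Matrix K K R)) :
    comp I L K K R (A * B) = comp I J K K R A * comp J L K K R B := by
  ext
  exact sum_apply .. |>.trans <| .symm <| Fintype.sum_prod_type ..

theorem comp_conjTranspose [Star R] (A : Matrix I J (Matrix K K R)) :
    comp J I K K R Aᴴ = (comp I J K K R A)ᴴ :=
  rfl

theorem dotProduct_mulVec_comp [Fintype I] [Fintype J] [Fintype K] [Fintype L]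
    [NonUnitalNonAssocSemiring R] (B : Matrix I J (Matrix K L R)) (v : I × K → R) (w : J × L → R) :
    v ⬝ᵥ comp I J K L R B *ᵥ w =
      ∑ i, ∑ j, Function.curry v i ⬝ᵥ B i j *ᵥ Function.curry w j := by
  simp only [dotProduct, mulVec, comp_apply, Fintype.sum_prod_type, Finset.mul_sum,
    Function.curry_apply]
  exact Finset.sum_congr rfl fun i _ => Finset.sum_comm

theorem posSemidef_comp_conjTranspose_mul_self [Fintype I] [Fintype J] [Fintype K]
    [Ring R] [PartialOrder R] [StarRing R] [StarOrderedRing R]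
    (X : Matrix I J (Matrix K K R)) : (comp J J K K R (Xᴴ * X)).PosSemidef := by
  rw [comp_mul, comp_conjTranspose]
  exact posSemidef_conjTranspose_mul_self _

theorem PosSemidef.exists_eq_conjTranspose_mul_self {n 𝕜 : Type*} [Fintype n] [DecidableEq n]
    [RCLike 𝕜] {M : Matrix n n 𝕜} (hM : M.PosSemidef) : ∃ R : Matrix n n 𝕜, M = Rᴴ * R := by
  open scoped MatrixOrder in
  exact ⟨CFC.sqrt M, by
    rw [(CFC.sqrt_nonneg M).posSemidef.isHermitian.eq, CFC.sqrt_mul_sqrt_self M hM.nonneg]⟩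

theorem posSemidef_of_dotProduct_mulVec_nonneg {n : Type*} [Fintype n] [DecidableEq n]
    {M : Matrix n n ℂ} (hM : ∀ x, 0 ≤ star x ⬝ᵥ (M *ᵥ x)) : M.PosSemidef := by
  rw [← isPositive_toEuclideanLin_iff, LinearMap.isPositive_iff]
  have hinner (x : EuclideanSpace ℂ n) : 0 ≤ inner ℂ (M.toEuclideanLin x) x := by
    rw [← inner_conj_symm, EuclideanSpace.inner_eq_star_dotProduct]
    simpa [dotProduct_comm] using star_nonneg_iff.2 (hM x)
  exact ⟨(LinearMap.isSymmetric_iff_inner_map_self_real _).2 fun x => (hinner x).isSelfAdjoint,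
    hinner⟩

end Matrix

section

variable {n : ℕ} (T : Matrix (Fin n) (Fin n) ℂ →ₗ[ℂ] Matrix (Fin n) (Fin n) ℂ)

def blockForm {k : ℕ} (a : Fin k → Matrix (Fin n) (Fin n) ℂ) (v : Fin k → Fin n → ℂ) : ℂ :=
  ∑ i, ∑ j, star (v i) ⬝ᵥ (T ((a i)ᴴ * a j) *ᵥ v j)

theorem mapBlocks_comp {k : ℕ} (B : Matrix (Fin k) (Fin k) (Matrix (Fin n) (Fin n) ℂ)) :
    mapBlocks k T (comp _ _ _ _ _ B) = comp _ _ _ _ _ (B.map T) :=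
  rfl

theorem star_dotProduct_mapBlocks_comp_conjTranspose_mul_self_mulVec {ι : Type*} [Fintype ι]
    {k : ℕ} (X : Matrix ι (Fin k) (Matrix (Fin n) (Fin n) ℂ)) (x : Fin k × Fin n → ℂ) :
    star x ⬝ᵥ mapBlocks k T (comp _ _ _ _ _ (Xᴴ * X)) *ᵥ x =
      ∑ l, blockForm T (X l) (Function.curry x) := by
  rw [mapBlocks_comp, dotProduct_mulVec_comp]
  simp only [blockForm, map_apply, mul_apply, conjTranspose_apply, map_sum, sum_mulVec,
    dotProduct_sum]
  exact (Finset.sum_congr rfl fun _ _ => Finset.sum_comm).trans Finset.sum_comm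

theorem isCompletelyPositive_iff_forall_blockForm_nonneg :
    IsCompletelyPositive T ↔ ∀ (k : ℕ) (a : Fin k → Matrix (Fin n) (Fin n) ℂ)
      (v : Fin k → Fin n → ℂ), 0 ≤ blockForm T a v := by
  constructor
  · intro hT k a v
    have := (hT k _ (posSemidef_comp_conjTranspose_mul_self (replicateRow Unit a))
      ).dotProduct_mulVec_nonneg (Function.uncurry v)
    rwa [star_dotProduct_mapBlocks_comp_conjTranspose_mul_self_mulVec, Fintype.sum_unique,
      Function.curry_uncurry] at this
  · intro h k M hM
    obtain ⟨R, rfl⟩ := hM.exists_eq_conjTranspose_mul_self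
    obtain ⟨X, rfl⟩ := (comp _ _ _ _ ℂ).surjective R
    refine posSemidef_of_dotProduct_mulVec_nonneg fun x => ?_
    rw [← comp_conjTranspose, ← comp_mul,
      star_dotProduct_mapBlocks_comp_conjTranspose_mul_self_mulVec]
    exact Finset.sum_nonneg fun _ _ => h k _ _

end

/-- `T` is completely positive iff `∑_{i,j} ⟨cᵢ g, T(aᵢ* aⱼ) cⱼ g⟩ ≥ 0`
for all finite families `aᵢ, cᵢ` of matrices and all vectors `g`. -/
theorem completelyPositive_iff_quadratic_form (n : ℕ)
    (T : Matrix (Fin n) (Fin n) ℂ →ₗ[ℂ] Matrix (Fin n) (Fin n) ℂ) :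
    IsCompletelyPositive T ↔
    (∀ (k : ℕ) (a c : Fin k → Matrix (Fin n) (Fin n) ℂ) (g : Fin n → ℂ),
      0 ≤ ∑ i, ∑ j,
        star (c i *ᵥ g) ⬝ᵥ (T ((a i)ᴴ * a j) *ᵥ (c j *ᵥ g))) := by
  rw [isCompletelyPositive_iff_forall_blockForm_nonneg]
  refine ⟨fun h k a c g => h k a _, fun h k a v => ?_⟩
  have hdiag (i : Fin k) : diagonal (v i) *ᵥ 1 = v i := by ext; simp [mulVec_diagonal]
  simpa only [blockForm, hdiag] using h k a (fun i => diagonal (v i)) 1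
end

section
/- Every Hermiticity-preserving linear map T : Mₙ(ℂ) → Mₙ(ℂ) (i.e., T(a*) = T(a)* for all a) can be written as T = T₊ − T₋ where T₊ and T₋ are completely positive maps. -/
/-!
A linear map `T` on `Mₙ` is recovered linearly from its Choi matrix `C_T = ∑ E_ij ⊗ T(E_ij)`,
and `C_T` is Hermitian when `T` preserves Hermiticity. The Jordan decomposition
`C_T = C₊ - C₋` into positive semidefinite parts then splits `T` accordingly, and a positive
semidefinite Choi matrix `C = ∑ v_r v_r*` yields a sum of Kraus maps `a ↦ K_r a K_r*`, each of
which is completely positive because `id ⊗ (a ↦ K a K*)` is conjugation by `1 ⊗ K`.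
-/

open scoped ComplexOrder Matrix

open Matrix
open scoped Kronecker

open scoped MatrixOrder in
theorem Matrix.IsHermitian.exists_posSemidef_sub_posSemidef {𝕜 n : Type*} [RCLike 𝕜]
    [Fintype n] [DecidableEq n] {A : Matrix n n 𝕜} (hA : A.IsHermitian) :
    ∃ P N : Matrix n n 𝕜, P.PosSemidef ∧ N.PosSemidef ∧ A = P - N :=
  ⟨A⁺, A⁻, (CFC.posPart_nonneg A).posSemidef, (CFC.negPart_nonneg A).posSemidef,
    (CFC.posPart_sub_negPart A hA).symm⟩

section Choi

variable {R n : Type*} [CommSemiring R]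

def choi [DecidableEq n] (T : Matrix n n R →ₗ[R] Matrix n n R) : Matrix (n × n) (n × n) R :=
  of fun p q => T (single p.1 q.1 1) p.2 q.2

theorem isHermitian_choi [StarRing R] [DecidableEq n] {T : Matrix n n R →ₗ[R] Matrix n n R}
    (hT : ∀ a, T aᴴ = (T a)ᴴ) : (choi T).IsHermitian := by
  ext p q
  rw [conjTranspose_apply, choi, of_apply, of_apply, ← conjTranspose_apply, ← hT,
    conjTranspose_single, star_one]

variable [Fintype n]

def choiMap : Matrix (n × n) (n × n) R →ₗ[R] Matrix n n R →ₗ[R] Matrix n n R :=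
  LinearMap.mk₂ R (fun C a => of fun k l => ∑ i, ∑ j, a i j * C (i, k) (j, l))
    (fun C D a => by ext; simp [mul_add, Finset.sum_add_distrib])
    (fun c C a => by ext; simp [Finset.mul_sum, mul_left_comm])
    (fun C a b => by ext; simp [add_mul, Finset.sum_add_distrib])
    (fun c C a => by ext; simp [Finset.mul_sum, mul_assoc])

theorem choiMap_choi [DecidableEq n] (T : Matrix n n R →ₗ[R] Matrix n n R) :
    choiMap (choi T) = T := by
  ext a k l
  have single_eq_smul : ∀ i j, single i j (a i j) = a i j • single i j (1 : R) := by
    simp [smul_single]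
  conv_rhs => rw [matrix_eq_sum_single a]
  simp only [choiMap, choi, LinearMap.mk₂_apply, of_apply, single_eq_smul, map_sum, map_smul,
    Matrix.sum_apply, Matrix.smul_apply, smul_eq_mul]

def krausMap [StarRing R] (K : Matrix n n R) : Matrix n n R →ₗ[R] Matrix n n R where
  toFun a := K * a * Kᴴ
  map_add' a b := by simp [mul_add, add_mul]
  map_smul' c a := by simp

theorem choiMap_vecMulVec [StarRing R] (v : n × n → R) :
    choiMap (vecMulVec v (star v)) = krausMap (of fun k i => v (i, k)) := by
  ext a k l
  simp only [choiMap, krausMap, LinearMap.mk₂_apply, LinearMap.coe_mk, AddHom.coe_mk, of_apply,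
    mul_apply, vecMulVec_apply, conjTranspose_apply, Pi.star_apply, Finset.sum_mul]
  rw [Finset.sum_comm]
  exact Finset.sum_congr rfl fun _ _ => Finset.sum_congr rfl fun _ _ => by ring

end Choi

section CompletelyPositive

variable {n : ℕ}

theorem mapBlocks_add (k : ℕ) (T S : Matrix (Fin n) (Fin n) ℂ →ₗ[ℂ] Matrix (Fin n) (Fin n) ℂ)
    (M : Matrix (Fin k × Fin n) (Fin k × Fin n) ℂ) :
    mapBlocks k (T + S) M = mapBlocks k T M + mapBlocks k S M :=
  rfl

theorem mapBlocks_krausMap (k : ℕ) (K : Matrix (Fin n) (Fin n) ℂ)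
    (M : Matrix (Fin k × Fin n) (Fin k × Fin n) ℂ) :
    mapBlocks k (krausMap K) M = (1 ⊗ₖ K) * M * (1 ⊗ₖ K)ᴴ := by
  ext p q
  simp [mapBlocks, krausMap, mul_apply, kroneckerMap_apply, one_apply, Fintype.sum_prod_type,
    apply_ite (starRingEnd ℂ)]

theorem isCompletelyPositive_zero :
    IsCompletelyPositive (0 : Matrix (Fin n) (Fin n) ℂ →ₗ[ℂ] Matrix (Fin n) (Fin n) ℂ) :=
  fun _ _ _ => PosSemidef.zero

theorem IsCompletelyPositive.add {T S : Matrix (Fin n) (Fin n) ℂ →ₗ[ℂ] Matrix (Fin n) (Fin n) ℂ}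
    (hT : IsCompletelyPositive T) (hS : IsCompletelyPositive S) : IsCompletelyPositive (T + S) :=
  fun k M hM => mapBlocks_add k T S M ▸ (hT k M hM).add (hS k M hM)

theorem isCompletelyPositive_sum {ι : Type*} (s : Finset ι)
    {T : ι → Matrix (Fin n) (Fin n) ℂ →ₗ[ℂ] Matrix (Fin n) (Fin n) ℂ}
    (hT : ∀ i ∈ s, IsCompletelyPositive (T i)) : IsCompletelyPositive (∑ i ∈ s, T i) :=
  Finset.sum_induction T IsCompletelyPositive (fun _ _ => IsCompletelyPositive.add)
    isCompletelyPositive_zero hT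

theorem isCompletelyPositive_krausMap (K : Matrix (Fin n) (Fin n) ℂ) :
    IsCompletelyPositive (krausMap K) := fun k M hM => by
  rw [mapBlocks_krausMap]
  exact hM.mul_mul_conjTranspose_same _

theorem isCompletelyPositive_choiMap {C : Matrix (Fin n × Fin n) (Fin n × Fin n) ℂ}
    (hC : C.PosSemidef) : IsCompletelyPositive (choiMap C) := by
  obtain ⟨m, v, rfl⟩ := posSemidef_iff_eq_sum_vecMulVec.mp hC
  simp only [map_sum, choiMap_vecMulVec]
  exact isCompletelyPositive_sum _ fun r _ => isCompletelyPositive_krausMap _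

end CompletelyPositive

/-- Every Hermiticity-preserving linear map on `Mₙ(ℂ)` is a difference of two
completely positive maps. -/
theorem hermitian_preserving_eq_sub_of_cp (n : ℕ)
    (T : Matrix (Fin n) (Fin n) ℂ →ₗ[ℂ] Matrix (Fin n) (Fin n) ℂ)
    (hT : ∀ a : Matrix (Fin n) (Fin n) ℂ, T aᴴ = (T a)ᴴ) :
    ∃ Tp Tm : Matrix (Fin n) (Fin n) ℂ →ₗ[ℂ] Matrix (Fin n) (Fin n) ℂ,
      IsCompletelyPositive Tp ∧ IsCompletelyPositive Tm ∧ T = Tp - Tm := by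
  obtain ⟨P, N, hP, hN, hPN⟩ := (isHermitian_choi hT).exists_posSemidef_sub_posSemidef
  refine ⟨choiMap P, choiMap N, isCompletelyPositive_choiMap hP,
    isCompletelyPositive_choiMap hN, ?_⟩
  rw [← map_sub, ← hPN, choiMap_choi]
end
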